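/- arXiv:1602.02384 — 5 statements merged into one kernel-verified Lean document; each statement's English description precedes it below -/
import Mathlib

section
/- Fix n ≥ 1 and p ∈ (0,1), and let b = ⌊pn⌋. Let Φ : Fin M → PMF (Fin n → Bool) be any stochastic encoder and ψ : (Fin n → Option Bool) → Fin M any decoder. Define the channel output y(x) : Fin n → Option Bool by y(x)_i = none for i < b and y(x)_i = some x_i for i ≥ b (i.e., the adversary erases the first b transmitted bits). If for every message m : Fin M the probability over X drawn from Φ(m) that ψ(y(X)) = m is strictly greater than 1/2, then M ≤ 2^{n−b+1}. (This yields the converse part of the capacity theorem: no rate above 1−p is achievable even with stochastic encoding.) -/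
open scoped ENNReal

/-- Converse: against the adversary that erases the first `⌊pn⌋` bits, any stochastic
code in which every message is decoded correctly with probability strictly greater than
`1/2` has at most `2 ^ (n - ⌊pn⌋ + 1)` messages. -/
theorem deterministic_erasure_converse
    (n : ℕ) (hn : 1 ≤ n) (p : ℝ) (hp0 : 0 < p) (hp1 : p < 1) (M : ℕ)
    (Φ : Fin M → PMF (Fin n → Bool)) (ψ : (Fin n → Option Bool) → Fin M)
    (y : (Fin n → Bool) → Fin n → Option Bool)
    (hy : ∀ (x : Fin n → Bool) (i : Fin n),
      y x i = if (i : ℕ) < ⌊p * (n : ℝ)⌋₊ then none else some (x i))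
    (hgood : ∀ m : Fin M,
      (1 / 2 : ℝ≥0∞) < (Φ m).toOuterMeasure {x | ψ (y x) = m}) :
    M ≤ 2 ^ (n - ⌊p * (n : ℝ)⌋₊ + 1) := by
  set b := ⌊p * (n : ℝ)⌋₊ with hb
  -- every message has a witness codeword
  have hx : ∀ m : Fin M, ∃ x, ψ (y x) = m := by
    intro m
    by_contra h
    push_neg at h
    have he : {x | ψ (y x) = m} = (∅ : Set (Fin n → Bool)) := by
      ext x; simpa using h x
    have := hgood m
    rw [he] at this
    simp at this
  choose x hxs using hx
  -- the fingerprint: last n - b bits of the witness codeword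
  let F : Fin M → (Fin (n - b) → Bool) :=
    fun m j => (y (x m) ⟨b + (j:ℕ), by have := j.isLt; omega⟩).getD false
  have hval : ∀ (m : Fin M) (j : Fin (n - b)),
      F m j = x m ⟨b + (j:ℕ), by have := j.isLt; omega⟩ := by
    intro m j
    simp only [F]
    rw [hy, if_neg (by simp)]
    simp
  have hFinj : Function.Injective F := by
    intro m m' hmm
    have hyy : y (x m) = y (x m') := by
      funext i
      rw [hy (x m) i, hy (x m') i]
      by_cases hi : (i:ℕ) < b
      · rw [if_pos hi, if_pos hi]
      · rw [if_neg hi, if_neg hi]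
        have hj := congrFun hmm ⟨(i:ℕ) - b, by have := i.isLt; omega⟩
        rw [hval, hval] at hj
        rw [show (⟨b + ((⟨(i:ℕ) - b, by have := i.isLt; omega⟩ : Fin (n - b)) : ℕ),
            by have := i.isLt; omega⟩ : Fin n) = i from by ext; simp; omega] at hj
        rw [hj]
    rw [← hxs m, ← hxs m', hyy]
  have hcard : M ≤ 2 ^ (n - b) := by
    have := Fintype.card_le_of_injective F hFinj
    simpa using this
  calc M ≤ 2 ^ (n - b) := hcard
    _ ≤ 2 ^ (n - b + 1) := Nat.pow_le_pow_right (by norm_num) (Nat.le_succ _)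
end

section
/- For every p ∈ (0,1) there exists ε₁ > 0 such that for every ε ∈ (0, ε₁) with 1 − p − ε > 0 there exists N such that for every n ≥ N, with K = ⌊(log₂ n)/4⌋ and M = ⌈2^{n(1−p−ε)}⌉, there exist base codewords u(m) : Fin n → Bool for m : Fin M and partition maps part_m : Fin n → Fin K for m : Fin M with the following two properties. (Coherence:) for every pair of distinct messages m ≠ m' and every subset T ⊆ Fin n with |T| ≥ ε·n/2, the number of positions i ∈ T with part_m(i) = part_{m'}(i) is at most |T|/2. (List-decodability:) for every subset T' ⊆ Fin n with |T'| = ⌈n(1−p−ε/2)⌉ and every word y : T' → Bool, the number of messages m such that the restriction of u(m) to T' differs from y in at most n^{3/4} positions is less than (ε/2)·log₂ log₂ n. -/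
set_option maxHeartbeats 2000000


open scoped Classical
open Filter
open Finset

section counting
variable {ι γ : Type*} [Fintype ι] [Fintype γ]

lemma card_le_of_fix (s : Finset (ι → γ)) (A : Finset ι) (c : ι → γ)
    (hs : ∀ f ∈ s, ∀ i ∈ A, f i = c i) :
    s.card ≤ Fintype.card γ ^ (Fintype.card ι - A.card) := by
  classical
  have htarget : (Finset.univ : Finset ({i : ι // i ∉ A} → γ)).card
      = Fintype.card γ ^ (Fintype.card ι - A.card) := by
    rw [Finset.card_univ, Fintype.card_fun, Fintype.card_subtype_compl, Fintype.card_coe]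
  rw [← htarget]
  apply Finset.card_le_card_of_injOn (fun f (j : {i : ι // i ∉ A}) => f j.1)
    (fun f _ => Finset.mem_univ _)
  intro f₁ h₁ f₂ h₂ heq
  funext i
  by_cases h : i ∈ A
  · rw [hs f₁ h₁ i h, hs f₂ h₂ i h]
  · exact congrFun heq ⟨i, h⟩

lemma card_le_of_copy (s : Finset (ι → γ)) (A : Finset ι) (ρ : ι → ι)
    (hρ : ∀ i ∈ A, ρ i ∉ A)
    (hs : ∀ f ∈ s, ∀ i ∈ A, f i = f (ρ i)) :
    s.card ≤ Fintype.card γ ^ (Fintype.card ι - A.card) := by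
  classical
  have htarget : (Finset.univ : Finset ({i : ι // i ∉ A} → γ)).card
      = Fintype.card γ ^ (Fintype.card ι - A.card) := by
    rw [Finset.card_univ, Fintype.card_fun, Fintype.card_subtype_compl, Fintype.card_coe]
  rw [← htarget]
  apply Finset.card_le_card_of_injOn (fun f (j : {i : ι // i ∉ A}) => f j.1)
    (fun f _ => Finset.mem_univ _)
  intro f₁ h₁ f₂ h₂ heq
  funext i
  by_cases h : i ∈ A
  · rw [hs f₁ h₁ i h, hs f₂ h₂ i h]
    exact congrFun heq ⟨ρ i, hρ i h⟩
  · exact congrFun heq ⟨i, h⟩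

end counting

lemma choose_le_two_pow' {n s : ℕ} (h : s ≤ n) : n.choose s ≤ 2 ^ n := by
  rw [← Nat.sum_range_choose n]
  exact Finset.single_le_sum (fun i _ => Nat.zero_le _)
    (Finset.mem_range.mpr (Nat.lt_succ_of_le h))

lemma exists_part (n M K s : ℕ) (hM : 1 ≤ M) (hs : s ≤ n)
    (h : M * M * 2 ^ n < K ^ s) :
    ∃ part : Fin M → Fin n → Fin K,
      ∀ m m', m ≠ m' →
        (Finset.univ.filter fun i => part m i = part m' i).card < s := by
  classical
  have hcardΩ : Fintype.card (Fin M × Fin n → Fin K) = K ^ (M * n) := by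
    rw [Fintype.card_fun]
    congr 1
    · exact Fintype.card_fin K
    · simp
  set Bad : Finset (Fin M × Fin n → Fin K) := Finset.univ.filter fun f =>
    ∃ m m', m ≠ m' ∧ s ≤ (Finset.univ.filter fun i => f (m, i) = f (m', i)).card with hBad
  set idx := (((Finset.univ : Finset (Fin M)).offDiag) ×ˢ
      (Finset.powersetCard s (Finset.univ : Finset (Fin n)))) with hidx
  set F : (Fin M × Fin M) × Finset (Fin n) → Finset (Fin M × Fin n → Fin K) := fun z =>
    Finset.univ.filter fun f =>
      ∀ x ∈ (z.2.image fun i => (z.1.2, i)), f x = f (z.1.1, x.2) with hF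
  have hcover : Bad ⊆ idx.biUnion F := by
    intro f hf
    rw [hBad, Finset.mem_filter] at hf
    obtain ⟨-, m, m', hne, hcard⟩ := hf
    obtain ⟨S, hSsub, hScard⟩ :=
      Finset.exists_subset_card_eq hcard
    refine Finset.mem_biUnion.mpr ⟨((m, m'), S), ?_, ?_⟩
    · rw [hidx, Finset.mem_product]
      exact ⟨Finset.mem_offDiag.mpr ⟨Finset.mem_univ _, Finset.mem_univ _, hne⟩,
        Finset.mem_powersetCard.mpr ⟨Finset.subset_univ _, hScard⟩⟩
    · rw [hF, Finset.mem_filter]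
      refine ⟨Finset.mem_univ _, ?_⟩
      intro x hx
      rw [Finset.mem_image] at hx
      obtain ⟨i, hiS, rfl⟩ := hx
      have := hSsub hiS
      rw [Finset.mem_filter] at this
      exact this.2.symm
  have hFcard : ∀ z ∈ idx, (F z).card ≤ K ^ (M * n - s) := by
    intro z hz
    rw [hidx, Finset.mem_product] at hz
    obtain ⟨hzo, hzp⟩ := hz
    rw [Finset.mem_offDiag] at hzo
    rw [Finset.mem_powersetCard] at hzp
    have hinj : Function.Injective (fun i : Fin n => ((z.1.2 : Fin M), i)) := by
      intro a b hab
      simpa using hab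
    have hA : (z.2.image fun i => (z.1.2, i)).card = s := by
      rw [Finset.card_image_of_injective _ hinj, hzp.2]
    have hρ : ∀ x ∈ (z.2.image fun i => (z.1.2, i)),
        ((fun x : Fin M × Fin n => (z.1.1, x.2)) x) ∉ (z.2.image fun i => (z.1.2, i)) := by
      intro x hx hmem
      rw [Finset.mem_image] at hmem
      obtain ⟨i, -, hi⟩ := hmem
      exact hzo.2.2 (congrArg Prod.fst hi).symm
    have hmem : ∀ f ∈ F z, ∀ x ∈ (z.2.image fun i => (z.1.2, i)),
        f x = f ((fun x : Fin M × Fin n => (z.1.1, x.2)) x) := by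
      intro f hf
      rw [hF, Finset.mem_filter] at hf
      exact hf.2
    have hle := card_le_of_copy (γ := Fin K) (F z) (z.2.image fun i => (z.1.2, i))
      (fun x : Fin M × Fin n => (z.1.1, x.2)) hρ hmem
    rw [hA] at hle
    calc (F z).card ≤ Fintype.card (Fin K) ^ (Fintype.card (Fin M × Fin n) - s) := hle
      _ = K ^ (M * n - s) := by
          congr 1
          · exact Fintype.card_fin K
          · congr 1
            simp
  have hBadcard : Bad.card < K ^ (M * n) := by
    calc Bad.card ≤ (idx.biUnion F).card := Finset.card_le_card hcover
      _ ≤ ∑ z ∈ idx, (F z).card := Finset.card_biUnion_le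
      _ ≤ idx.card * K ^ (M * n - s) := by
          rw [← smul_eq_mul]
          exact Finset.sum_le_card_nsmul _ _ _ hFcard
      _ ≤ (M * M * 2 ^ n) * K ^ (M * n - s) := by
          apply Nat.mul_le_mul_right
          rw [hidx, Finset.card_product, Finset.offDiag_card, Finset.card_powersetCard]
          simp only [Finset.card_univ, Fintype.card_fin]
          exact Nat.mul_le_mul (Nat.sub_le _ _) (choose_le_two_pow' hs)
      _ < K ^ s * K ^ (M * n - s) := by
          have hK : 0 < K := by
            rcases Nat.eq_zero_or_pos K with hK0 | hK0
            · exfalso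
              have hpos : 0 < M * M * 2 ^ n :=
                Nat.mul_pos (Nat.mul_pos hM hM) (Nat.two_pow_pos n)
              rcases Nat.eq_zero_or_pos s with hs0 | hs0
              · rw [hK0, hs0, pow_zero] at h
                omega
              · rw [hK0, zero_pow hs0.ne'] at h
                omega
            · exact hK0
          exact Nat.mul_lt_mul_of_lt_of_le h le_rfl (by positivity)
      _ = K ^ (M * n) := by
          rw [← pow_add]
          congr 1
          have : s ≤ M * n := le_trans hs (Nat.le_mul_of_pos_left n hM)
          omega
  have hex : ∃ f : Fin M × Fin n → Fin K, f ∉ Bad := by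
    by_contra h'
    push_neg at h'
    have : Bad = Finset.univ := Finset.eq_univ_iff_forall.mpr h'
    rw [this, Finset.card_univ, hcardΩ] at hBadcard
    exact lt_irrefl _ hBadcard
  obtain ⟨f, hf⟩ := hex
  refine ⟨fun m i => f (m, i), ?_⟩
  intro m m' hne
  by_contra hc
  push_neg at hc
  exact hf (by
    rw [hBad, Finset.mem_filter]
    exact ⟨Finset.mem_univ _, m, m', hne, hc⟩)

lemma exists_code (n M t r0 L : ℕ) (hn : 1 ≤ n)
    (h : 2 ^ n * 2 ^ n * (M ^ L * ((r0 + 1) * n ^ r0) ^ L) * 2 ^ (M * n - L * t)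
      < 2 ^ (M * n)) :
    ∃ u : Fin M → Fin n → Bool,
      ∀ T' : Finset (Fin n), T'.card = t → ∀ y : Fin n → Bool,
        (Finset.univ.filter fun m =>
          (T'.filter fun i => u m i ≠ y i).card ≤ r0).card < L := by
  classical
  set Q : Finset (Finset (Fin n)) :=
    (Finset.univ : Finset (Fin n)).powerset.filter (fun E => E.card ≤ r0) with hQdef
  have hQ : Q.card ≤ (r0 + 1) * n ^ r0 := by
    have hsub : Q ⊆ (Finset.range (r0 + 1)).biUnion
        (fun j => Finset.powersetCard j (Finset.univ : Finset (Fin n))) := by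
      intro E hE
      rw [hQdef, Finset.mem_filter] at hE
      exact Finset.mem_biUnion.mpr ⟨E.card, Finset.mem_range.mpr (Nat.lt_succ_of_le hE.2),
        Finset.mem_powersetCard.mpr ⟨Finset.subset_univ _, rfl⟩⟩
    calc Q.card ≤ _ := Finset.card_le_card hsub
      _ ≤ ∑ j ∈ Finset.range (r0 + 1), (Finset.powersetCard j
            (Finset.univ : Finset (Fin n))).card := Finset.card_biUnion_le
      _ ≤ (Finset.range (r0 + 1)).card • n ^ r0 := by
          apply Finset.sum_le_card_nsmul
          intro j hj
          rw [Finset.card_powersetCard, Finset.card_univ, Fintype.card_fin]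
          exact le_trans (Nat.choose_le_pow n j)
            (Nat.pow_le_pow_right hn (Nat.le_of_lt_succ (Finset.mem_range.mp hj)))
      _ = (r0 + 1) * n ^ r0 := by rw [Finset.card_range, smul_eq_mul]
  have hcardΩ : Fintype.card (Fin M × Fin n → Bool) = 2 ^ (M * n) := by
    rw [Fintype.card_fun, Fintype.card_bool, Fintype.card_prod, Fintype.card_fin,
      Fintype.card_fin]
  set Bad : Finset (Fin M × Fin n → Bool) := Finset.univ.filter fun f =>
    ∃ T' : Finset (Fin n), T'.card = t ∧ ∃ y : Fin n → Bool,
      L ≤ (Finset.univ.filter fun m =>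
        (T'.filter fun i => f (m, i) ≠ y i).card ≤ r0).card with hBad
  set idx := ((Finset.powersetCard t (Finset.univ : Finset (Fin n))) ×ˢ
      (Finset.univ : Finset (Fin n → Bool))) ×ˢ
      ((Finset.powersetCard L (Finset.univ : Finset (Fin M))).sigma
        (fun W => W.pi (fun _ => Q))) with hidx
  set c : ((Finset (Fin n) × (Fin n → Bool)) ×
      Σ W : Finset (Fin M), (∀ a ∈ W, Finset (Fin n))) → Fin M × Fin n → Bool :=
    fun z x => if hx : x.1 ∈ z.2.1 then
      (if x.2 ∈ z.2.2 x.1 hx then !(z.1.2 x.2) else z.1.2 x.2) else true with hc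
  set F : ((Finset (Fin n) × (Fin n → Bool)) ×
      Σ W : Finset (Fin M), (∀ a ∈ W, Finset (Fin n))) → Finset (Fin M × Fin n → Bool) :=
    fun z => Finset.univ.filter fun f => ∀ x ∈ z.2.1 ×ˢ z.1.1, f x = c z x with hF
  have hcover : Bad ⊆ idx.biUnion F := by
    intro f hf
    rw [hBad, Finset.mem_filter] at hf
    obtain ⟨-, T', hT't, y, hL⟩ := hf
    obtain ⟨W, hWsub, hWcard⟩ := Finset.exists_subset_card_eq hL
    refine Finset.mem_biUnion.mpr
      ⟨((T', y), ⟨W, fun a _ => T'.filter fun i => f (a, i) ≠ y i⟩), ?_, ?_⟩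
    · rw [hidx, Finset.mem_product]
      constructor
      · rw [Finset.mem_product]
        exact ⟨Finset.mem_powersetCard.mpr ⟨Finset.subset_univ _, hT't⟩, Finset.mem_univ _⟩
      · rw [Finset.mem_sigma]
        refine ⟨Finset.mem_powersetCard.mpr ⟨Finset.subset_univ _, hWcard⟩, ?_⟩
        rw [Finset.mem_pi]
        intro a ha
        rw [hQdef, Finset.mem_filter]
        refine ⟨Finset.mem_powerset.mpr (Finset.subset_univ _), ?_⟩
        have := hWsub ha
        rw [Finset.mem_filter] at this
        exact le_trans (Finset.card_le_card (Finset.filter_subset_filter _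
          (Finset.Subset.refl T'))) this.2
    · rw [hF, Finset.mem_filter]
      refine ⟨Finset.mem_univ _, ?_⟩
      intro x hx
      rw [Finset.mem_product] at hx
      rw [hc]
      simp only [dif_pos hx.1]
      by_cases hfy : f x = y x.2
      · rw [if_neg, hfy]
        simp only [Finset.mem_filter]
        intro hcon
        exact hcon.2 hfy
      · rw [if_pos]
        · exact Bool.eq_not_iff.mpr hfy
        · simp only [Finset.mem_filter]
          exact ⟨hx.2, hfy⟩
  have hFcard : ∀ z ∈ idx, (F z).card ≤ 2 ^ (M * n - L * t) := by
    intro z hz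
    rw [hidx, Finset.mem_product] at hz
    obtain ⟨hz1, hz2⟩ := hz
    rw [Finset.mem_product] at hz1
    rw [Finset.mem_sigma] at hz2
    have hT'card : z.1.1.card = t := (Finset.mem_powersetCard.mp hz1.1).2
    have hWcard : z.2.1.card = L := (Finset.mem_powersetCard.mp hz2.1).2
    have hA : (z.2.1 ×ˢ z.1.1).card = L * t := by
      rw [Finset.card_product, hT'card, hWcard]
    have hmem : ∀ f ∈ F z, ∀ x ∈ z.2.1 ×ˢ z.1.1, f x = c z x := by
      intro f hf
      rw [hF, Finset.mem_filter] at hf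
      exact hf.2
    have hle := card_le_of_fix (γ := Bool) (F z) (z.2.1 ×ˢ z.1.1) (c z) hmem
    rw [hA] at hle
    calc (F z).card ≤ Fintype.card Bool ^ (Fintype.card (Fin M × Fin n) - L * t) := hle
      _ = 2 ^ (M * n - L * t) := by
          rw [Fintype.card_bool, Fintype.card_prod, Fintype.card_fin, Fintype.card_fin]
  have hidxcard : idx.card ≤ 2 ^ n * 2 ^ n * (M ^ L * ((r0 + 1) * n ^ r0) ^ L) := by
    rw [hidx, Finset.card_product, Finset.card_product]
    have h1 : (Finset.powersetCard t (Finset.univ : Finset (Fin n))).card ≤ 2 ^ n := by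
      rw [Finset.card_powersetCard, Finset.card_univ, Fintype.card_fin]
      rcases le_or_gt t n with h' | h'
      · exact choose_le_two_pow' h'
      · rw [Nat.choose_eq_zero_of_lt h']
        positivity
    have h2 : (Finset.univ : Finset (Fin n → Bool)).card = 2 ^ n := by
      rw [Finset.card_univ, Fintype.card_fun, Fintype.card_bool, Fintype.card_fin]
    have h3 : ((Finset.powersetCard L (Finset.univ : Finset (Fin M))).sigma
        (fun W => W.pi (fun _ => Q))).card ≤ M ^ L * ((r0 + 1) * n ^ r0) ^ L := by
      rw [Finset.card_sigma]
      calc ∑ W ∈ Finset.powersetCard L (Finset.univ : Finset (Fin M)),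
            ((W.pi (fun _ => Q)).card)
          ≤ (Finset.powersetCard L (Finset.univ : Finset (Fin M))).card *
            (((r0 + 1) * n ^ r0) ^ L) := by
            rw [← smul_eq_mul]
            apply Finset.sum_le_card_nsmul
            intro W hW
            rw [Finset.card_pi]
            calc ∏ _a ∈ W, Q.card ≤ ∏ _a ∈ W, ((r0 + 1) * n ^ r0) :=
                Finset.prod_le_prod (fun _ _ => Nat.zero_le _) (fun _ _ => hQ)
              _ = ((r0 + 1) * n ^ r0) ^ W.card := Finset.prod_const _
              _ = ((r0 + 1) * n ^ r0) ^ L := by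
                  rw [(Finset.mem_powersetCard.mp hW).2]
        _ ≤ M ^ L * (((r0 + 1) * n ^ r0) ^ L) := by
            apply Nat.mul_le_mul_right
            rw [Finset.card_powersetCard, Finset.card_univ, Fintype.card_fin]
            exact Nat.choose_le_pow M L
    calc (Finset.powersetCard t (Finset.univ : Finset (Fin n))).card *
          (Finset.univ : Finset (Fin n → Bool)).card *
          ((Finset.powersetCard L (Finset.univ : Finset (Fin M))).sigma
            (fun W => W.pi (fun _ => Q))).card
        ≤ (2 ^ n * 2 ^ n) * (M ^ L * ((r0 + 1) * n ^ r0) ^ L) := by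
          exact Nat.mul_le_mul (by rw [h2]; exact Nat.mul_le_mul_right _ h1) h3
      _ = 2 ^ n * 2 ^ n * (M ^ L * ((r0 + 1) * n ^ r0) ^ L) := by ring
  have hBadcard : Bad.card < 2 ^ (M * n) := by
    calc Bad.card ≤ (idx.biUnion F).card := Finset.card_le_card hcover
      _ ≤ ∑ z ∈ idx, (F z).card := Finset.card_biUnion_le
      _ ≤ idx.card * 2 ^ (M * n - L * t) := by
          rw [← smul_eq_mul]
          exact Finset.sum_le_card_nsmul _ _ _ hFcard
      _ ≤ 2 ^ n * 2 ^ n * (M ^ L * ((r0 + 1) * n ^ r0) ^ L) * 2 ^ (M * n - L * t) :=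
          Nat.mul_le_mul_right _ hidxcard
      _ < 2 ^ (M * n) := h
  have hex : ∃ f : Fin M × Fin n → Bool, f ∉ Bad := by
    by_contra h'
    push_neg at h'
    have : Bad = Finset.univ := Finset.eq_univ_iff_forall.mpr h'
    rw [this, Finset.card_univ, hcardΩ] at hBadcard
    exact lt_irrefl _ hBadcard
  obtain ⟨f, hf⟩ := hex
  refine ⟨fun m i => f (m, i), ?_⟩
  intro T' hT' y
  by_contra hcon
  push_neg at hcon
  exact hf (by
    rw [hBad, Finset.mem_filter]
    exact ⟨Finset.mem_univ _, T', hT', y, hcon⟩)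

lemma two_rpow_two' : (2:ℝ) ^ (2:ℝ) = 4 := by
  have h : ((2:ℕ):ℝ) = (2:ℝ) := by norm_num
  rw [← h, Real.rpow_natCast]
  norm_num


/-- Existence of a good codebook: for every small enough `ε` and large enough `n`, with
`K = ⌊(log₂ n)/4⌋` parts and `M = ⌈2^{n(1-p-ε)}⌉` messages, there exist base codewords
and partition maps satisfying both the coherence property and the list-decodability
property. -/
theorem good_codebook_exists :
    ∀ p : ℝ, 0 < p → p < 1 →
    ∃ ε₁ : ℝ, 0 < ε₁ ∧
      ∀ ε : ℝ, 0 < ε → ε < ε₁ → 0 < 1 - p - ε →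
      ∃ N : ℕ, ∀ n : ℕ, N ≤ n →
      ∃ (u : Fin ⌈(2 : ℝ) ^ ((n : ℝ) * (1 - p - ε))⌉₊ → Fin n → Bool)
        (part : Fin ⌈(2 : ℝ) ^ ((n : ℝ) * (1 - p - ε))⌉₊ →
          Fin n → Fin ⌊Real.logb 2 (n : ℝ) / 4⌋₊),
        -- Coherence: any two distinct messages have matching parts on at most half of
        -- any set `T` of size at least `ε n / 2`.
        (∀ m m', m ≠ m' → ∀ T : Finset (Fin n), ε * (n : ℝ) / 2 ≤ (T.card : ℝ) →
          (((T.filter fun i => part m i = part m' i).card : ℝ) ≤ (T.card : ℝ) / 2)) ∧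
        -- List-decodability: on any set `T'` of `⌈n(1-p-ε/2)⌉` positions, any word has
        -- fewer than `(ε/2)·log₂ log₂ n` messages within Hamming distance `n^{3/4}`.
        (∀ T' : Finset (Fin n), T'.card = ⌈(n : ℝ) * (1 - p - ε / 2)⌉₊ →
          ∀ y : Fin n → Bool,
          ((Finset.univ.filter fun m =>
              (((T'.filter fun i => u m i ≠ y i).card : ℝ) ≤ (n : ℝ) ^ ((3 : ℝ) / 4))).card : ℝ)
            < (ε / 2) * Real.logb 2 (Real.logb 2 (n : ℝ))) := by
  intro p hp hp1
  refine ⟨1 - p, by linarith, ?_⟩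
  intro ε hε hεlt hδ
  have hε1 : ε < 1 := by linarith
  set k : ℕ := ⌈12 / ε⌉₊ + 4 with hkdef
  set L0 : ℕ := ⌈12 / ε⌉₊ + 1 with hL0def
  -- eventually logb 2 x ≤ c * x
  have hlogb_ev : ∀ c : ℝ, 0 < c → ∀ᶠ x : ℝ in atTop, Real.logb 2 x ≤ c * x := by
    intro c hc
    have h := (Real.isLittleO_log_id_atTop.const_mul_left ((Real.log 2)⁻¹)).def hc
    filter_upwards [h, eventually_ge_atTop (1 : ℝ)] with x hx hx1
    rw [Real.norm_eq_abs, Real.norm_eq_abs] at hx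
    have hlb : Real.logb 2 x = (Real.log 2)⁻¹ * Real.log x := by
      rw [Real.logb, div_eq_inv_mul]
    rw [hlb]
    calc (Real.log 2)⁻¹ * Real.log x ≤ |(Real.log 2)⁻¹ * Real.log x| := le_abs_self _
      _ ≤ c * |id x| := hx
      _ = c * x := by rw [id, abs_of_nonneg (by linarith)]
  -- eventually logb 2 x ≤ c * x ^ (1/4)
  have hlogb_rpow_ev : ∀ c : ℝ, 0 < c →
      ∀ᶠ x : ℝ in atTop, Real.logb 2 x ≤ c * x ^ ((1:ℝ)/4) := by
    intro c hc
    have h := ((isLittleO_log_rpow_atTop (by norm_num : (0:ℝ) < 1/4)).const_mul_left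
      ((Real.log 2)⁻¹)).def hc
    filter_upwards [h, eventually_ge_atTop (1 : ℝ)] with x hx hx1
    rw [Real.norm_eq_abs, Real.norm_eq_abs] at hx
    have hxr : (0:ℝ) ≤ x ^ ((1:ℝ)/4) := Real.rpow_nonneg (by linarith) _
    have hlb : Real.logb 2 x = (Real.log 2)⁻¹ * Real.log x := by
      rw [Real.logb, div_eq_inv_mul]
    rw [hlb]
    calc (Real.log 2)⁻¹ * Real.log x ≤ |(Real.log 2)⁻¹ * Real.log x| := le_abs_self _
      _ ≤ c * |x ^ ((1:ℝ)/4)| := hx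
      _ = c * x ^ ((1:ℝ)/4) := by rw [abs_of_nonneg hxr]
  -- master eventual inequality
  have hmaster_ev : ∀ᶠ x : ℝ in atTop,
      1 + (x ^ ((3:ℝ)/4) + 1) * (Real.logb 2 (x + 1) + 1) ≤ ε/8 * x := by
    filter_upwards [hlogb_rpow_ev (ε/96) (by positivity), eventually_ge_atTop (4 : ℝ),
      eventually_ge_atTop (16/ε)] with x hx1 hx4 hx16
    have hxpos : (0:ℝ) < x := by linarith
    have hlb2 : (2:ℝ) ≤ Real.logb 2 x := by
      rw [Real.le_logb_iff_rpow_le one_lt_two hxpos]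
      rw [two_rpow_two']
      linarith
    have hlog1 : Real.logb 2 (x + 1) ≤ 2 * Real.logb 2 x := by
      have hxx : x + 1 ≤ x * x := by nlinarith
      calc Real.logb 2 (x + 1) ≤ Real.logb 2 (x * x) :=
          Real.logb_le_logb_of_le one_lt_two (by linarith) hxx
        _ = Real.logb 2 x + Real.logb 2 x := Real.logb_mul (ne_of_gt hxpos) (ne_of_gt hxpos)
        _ = 2 * Real.logb 2 x := by ring
    have hfac : Real.logb 2 (x + 1) + 1 ≤ 3 * Real.logb 2 x := by linarith
    have hx34 : (1:ℝ) ≤ x ^ ((3:ℝ)/4) := by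
      calc (1:ℝ) = 1 ^ ((3:ℝ)/4) := (Real.one_rpow _).symm
        _ ≤ x ^ ((3:ℝ)/4) := Real.rpow_le_rpow zero_le_one (by linarith) (by norm_num)
    have hfac2 : x ^ ((3:ℝ)/4) + 1 ≤ 2 * x ^ ((3:ℝ)/4) := by linarith
    have hlbnn : 0 ≤ Real.logb 2 (x + 1) + 1 := by
      have := Real.logb_nonneg one_lt_two (by linarith : (1:ℝ) ≤ x + 1)
      linarith
    have hprod : (x ^ ((3:ℝ)/4) + 1) * (Real.logb 2 (x + 1) + 1)
        ≤ (2 * x ^ ((3:ℝ)/4)) * (3 * Real.logb 2 x) :=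
      mul_le_mul hfac2 hfac hlbnn (by positivity)
    have hxsplit : x ^ ((3:ℝ)/4) * x ^ ((1:ℝ)/4) = x := by
      rw [← Real.rpow_add hxpos]
      norm_num
    have hstep : (2 * x ^ ((3:ℝ)/4)) * (3 * Real.logb 2 x) ≤ ε/16 * x := by
      calc (2 * x ^ ((3:ℝ)/4)) * (3 * Real.logb 2 x)
          = 6 * x ^ ((3:ℝ)/4) * Real.logb 2 x := by ring
        _ ≤ 6 * x ^ ((3:ℝ)/4) * (ε/96 * x ^ ((1:ℝ)/4)) :=
            mul_le_mul_of_nonneg_left hx1 (by positivity)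
        _ = ε/16 * (x ^ ((3:ℝ)/4) * x ^ ((1:ℝ)/4)) := by ring
        _ = ε/16 * x := by rw [hxsplit]
    have hone : (1:ℝ) ≤ ε/16 * x := by
      have h1 : ε/16 * (16/ε) = 1 := by field_simp
      calc (1:ℝ) = ε/16 * (16/ε) := h1.symm
        _ ≤ ε/16 * x := mul_le_mul_of_nonneg_left hx16 (by positivity)
    linarith
  -- eventual: ε/2 * loglog x + 1 ≤ x
  have hloglog_ev : ∀ᶠ x : ℝ in atTop,
      ε/2 * Real.logb 2 (Real.logb 2 x) + 1 ≤ x := by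
    filter_upwards [hlogb_ev 1 one_pos, hlogb_ev (1/2) (by norm_num),
      eventually_ge_atTop (4 : ℝ)] with x h1 h12 hx4
    have hxpos : (0:ℝ) < x := by linarith
    have hlb2 : (2:ℝ) ≤ Real.logb 2 x := by
      rw [Real.le_logb_iff_rpow_le one_lt_two hxpos]
      rw [two_rpow_two']
      linarith
    have hll : Real.logb 2 (Real.logb 2 x) ≤ Real.logb 2 x :=
      Real.logb_le_logb_of_le one_lt_two (by linarith) (by linarith)
    have hmul : ε/2 * Real.logb 2 (Real.logb 2 x) ≤ ε/2 * Real.logb 2 x :=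
      mul_le_mul_of_nonneg_left hll (by positivity)
    have hmul2 : ε/2 * Real.logb 2 x ≤ Real.logb 2 x :=
      mul_le_of_le_one_left (by linarith) (by linarith)
    linarith
  -- tendsto facts
  have hcast : Tendsto (fun n : ℕ => (n : ℝ)) atTop atTop := tendsto_natCast_atTop_atTop
  have hK_t : Tendsto (fun n : ℕ => ⌊Real.logb 2 (n:ℝ) / 4⌋₊) atTop atTop :=
    tendsto_nat_floor_atTop.comp
      (((Real.tendsto_logb_atTop one_lt_two).comp hcast).atTop_div_const (by norm_num))
  have hL_t : Tendsto (fun n : ℕ => ⌈ε/2 * Real.logb 2 (Real.logb 2 (n:ℝ))⌉₊) atTop atTop :=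
    tendsto_nat_ceil_atTop.comp (Tendsto.const_mul_atTop (by positivity)
      ((Real.tendsto_logb_atTop one_lt_two).comp
        ((Real.tendsto_logb_atTop one_lt_two).comp hcast)))
  have hev : ∀ᶠ n : ℕ in atTop,
      (2^k ≤ ⌊Real.logb 2 (n:ℝ) / 4⌋₊) ∧
      (L0 ≤ ⌈ε/2 * Real.logb 2 (Real.logb 2 (n:ℝ))⌉₊) ∧
      (2 ≤ n) ∧
      (Real.logb 2 (n:ℝ) ≤ (1 - p - ε) * n) ∧
      (ε/2 * Real.logb 2 (Real.logb 2 (n:ℝ)) + 1 ≤ (n:ℝ)) ∧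
      (1 + ((n:ℝ) ^ ((3:ℝ)/4) + 1) * (Real.logb 2 ((n:ℝ) + 1) + 1) ≤ ε/8 * n) ∧
      (2 ≤ Real.logb 2 (n:ℝ)) := by
    filter_upwards [hK_t.eventually_ge_atTop (2^k), hL_t.eventually_ge_atTop L0,
      eventually_ge_atTop 2, hcast.eventually (hlogb_ev (1 - p - ε) hδ),
      hcast.eventually hloglog_ev, hcast.eventually hmaster_ev,
      hcast.eventually ((Real.tendsto_logb_atTop one_lt_two).eventually_ge_atTop 2)]
      with n a1 a2 a3 a4 a5 a6 a7
    exact ⟨a1, a2, a3, a4, a5, a6, a7⟩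
  obtain ⟨N, hNall⟩ := eventually_atTop.mp hev
  refine ⟨N + 2, ?_⟩
  intro n hn
  obtain ⟨hKge, hLge, hn2, hlogbδ, hloglog, hmas, hlb2⟩ := hNall n (by omega)
  set M := ⌈(2:ℝ) ^ ((n:ℝ) * (1 - p - ε))⌉₊ with hMdef
  set K := ⌊Real.logb 2 (n:ℝ) / 4⌋₊ with hKdef
  set s := ⌊ε * (n:ℝ) / 4⌋₊ + 1 with hsdef
  set t := ⌈(n:ℝ) * (1 - p - ε/2)⌉₊ with htdef
  set r0 := ⌊(n:ℝ) ^ ((3:ℝ)/4)⌋₊ with hr0def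
  set L := ⌈ε/2 * Real.logb 2 (Real.logb 2 (n:ℝ))⌉₊ with hLdef
  have hnR : (2:ℝ) ≤ (n:ℝ) := by exact_mod_cast hn2
  have hM1 : 1 ≤ M := Nat.ceil_pos.mpr (Real.rpow_pos_of_pos two_pos _)
  set aa := ⌈(n:ℝ) * (1 - p - ε)⌉₊ with haadef
  have hδn_nonneg : 0 ≤ (n:ℝ) * (1 - p - ε) :=
    mul_nonneg (by linarith) (le_of_lt hδ)
  have hMle : M ≤ 2 ^ aa := by
    have h1 : (2:ℝ) ^ ((n:ℝ) * (1 - p - ε)) ≤ ((2 ^ aa : ℕ) : ℝ) := by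
      push_cast
      rw [← Real.rpow_natCast 2 aa]
      exact Real.rpow_le_rpow_of_exponent_le one_le_two (Nat.le_ceil _)
    calc M ≤ ⌈((2 ^ aa : ℕ) : ℝ)⌉₊ := Nat.ceil_mono h1
      _ = 2 ^ aa := Nat.ceil_natCast _
  have haan : aa ≤ n := by
    have h1 : (n:ℝ) * (1 - p - ε) ≤ (n:ℝ) := by
      have hnn : (0:ℝ) ≤ (n:ℝ) * (p + ε) := mul_nonneg (by linarith) (by linarith)
      linarith
    calc aa ≤ ⌈(n:ℝ)⌉₊ := Nat.ceil_mono h1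
      _ = n := Nat.ceil_natCast n
  have hM2n : M ≤ 2 ^ n := le_trans hMle (Nat.pow_le_pow_right (by norm_num) haan)
  have hsn : s ≤ n := by
    have h1 : ε * (n:ℝ) / 4 ≤ ((n - 1 : ℕ) : ℝ) := by
      have : ((n - 1 : ℕ) : ℝ) = (n:ℝ) - 1 := by
        push_cast [Nat.cast_sub (by omega : 1 ≤ n)]
        ring
      rw [this]
      have hεn : ε * (n:ℝ) ≤ 1 * (n:ℝ) := mul_le_mul_of_nonneg_right hε1.le (by linarith)
      linarith
    have h2 := Nat.floor_mono h1
    rw [Nat.floor_natCast] at h2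
    omega
  have hsε : ε * (n:ℝ) / 4 < (s:ℝ) := by
    rw [hsdef]
    push_cast
    exact Nat.lt_floor_add_one _
  have hs1 : 1 ≤ s := by omega
  have hks : 3 * n + 1 ≤ k * s := by
    have hkR : 12/ε + 4 ≤ (k:ℝ) := by
      rw [hkdef]
      push_cast
      linarith [Nat.le_ceil (12/ε)]
    have hs1R : (1:ℝ) ≤ (s:ℝ) := by exact_mod_cast hs1
    have h12 : (12/ε) * (ε * (n:ℝ) / 4) = 3 * n := by
      field_simp
      ring
    have hmain : (3 * (n:ℝ) + 1) ≤ (k:ℝ) * (s:ℝ) := by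
      have t1 : (12/ε) * (ε * (n:ℝ)/4) ≤ (12/ε) * (s:ℝ) :=
        mul_le_mul_of_nonneg_left hsε.le (by positivity)
      calc (3 * (n:ℝ) + 1) ≤ (12/ε) * (ε * (n:ℝ)/4) + 4 * 1 := by rw [h12]; linarith
        _ ≤ (12/ε) * (s:ℝ) + 4 * (s:ℝ) := by linarith
        _ = (12/ε + 4) * (s:ℝ) := by ring
        _ ≤ (k:ℝ) * (s:ℝ) := mul_le_mul_of_nonneg_right hkR (by linarith)
    exact_mod_cast hmain
  have hpart_h : M * M * 2 ^ n < K ^ s := by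
    calc M * M * 2 ^ n ≤ 2^n * 2^n * 2^n :=
        Nat.mul_le_mul (Nat.mul_le_mul hM2n hM2n) le_rfl
      _ = 2 ^ (3 * n) := by
          rw [← pow_add, ← pow_add]
          congr 1
          omega
      _ < 2 ^ (3 * n + 1) := Nat.pow_lt_pow_right one_lt_two (by omega)
      _ ≤ 2 ^ (k * s) := Nat.pow_le_pow_right (by norm_num) hks
      _ = (2 ^ k) ^ s := by rw [pow_mul]
      _ ≤ K ^ s := Nat.pow_le_pow_left hKge s
  obtain ⟨part, hpart⟩ := exists_part n M K s hM1 hsn hpart_h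
  -- list-decodability side
  set cc := ⌈Real.logb 2 ((n:ℝ) + 1)⌉₊ with hccdef
  have hr0n : r0 ≤ n := by
    have h1 : (n:ℝ) ^ ((3:ℝ)/4) ≤ (n:ℝ) := by
      calc (n:ℝ) ^ ((3:ℝ)/4) ≤ (n:ℝ) ^ (1:ℝ) :=
          Real.rpow_le_rpow_of_exponent_le (by linarith) (by norm_num)
        _ = (n:ℝ) := Real.rpow_one _
    calc r0 ≤ ⌊(n:ℝ)⌋₊ := Nat.floor_mono h1
      _ = n := Nat.floor_natCast n
  have hn1c : n + 1 ≤ 2 ^ cc := by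
    have h1 : ((n:ℝ) + 1) ≤ ((2 ^ cc : ℕ) : ℝ) := by
      push_cast
      calc ((n:ℝ) + 1) = (2:ℝ) ^ (Real.logb 2 ((n:ℝ) + 1)) :=
          (Real.rpow_logb (by norm_num) (by norm_num) (by linarith)).symm
        _ ≤ (2:ℝ) ^ ((cc:ℝ)) :=
          Real.rpow_le_rpow_of_exponent_le one_le_two (Nat.le_ceil _)
        _ = (2:ℝ) ^ (cc:ℕ) := Real.rpow_natCast 2 cc
    exact_mod_cast h1
  have hq2 : (r0 + 1) * n ^ r0 ≤ 2 ^ (cc * (r0 + 1)) := by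
    calc (r0 + 1) * n ^ r0 ≤ (n + 1) * (n + 1) ^ r0 :=
        Nat.mul_le_mul (by omega) (Nat.pow_le_pow_left (by omega) r0)
      _ = (n + 1) ^ (r0 + 1) := by rw [pow_succ]; ring
      _ ≤ (2 ^ cc) ^ (r0 + 1) := Nat.pow_le_pow_left hn1c _
      _ = 2 ^ (cc * (r0 + 1)) := (pow_mul 2 cc (r0 + 1)).symm
  set b := cc * (r0 + 1) with hbdef
  have hL1 : 1 ≤ L := le_trans (by omega) hLge
  have hlbn : (0:ℝ) < Real.logb 2 (n:ℝ) := by linarith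
  have hll1 : (1:ℝ) ≤ Real.logb 2 (Real.logb 2 (n:ℝ)) := by
    rw [Real.le_logb_iff_rpow_le one_lt_two hlbn, Real.rpow_one]
    exact hlb2
  have hbound_nonneg : 0 ≤ ε/2 * Real.logb 2 (Real.logb 2 (n:ℝ)) :=
    mul_nonneg (by positivity) (by linarith)
  have hLn : L ≤ n := by
    have h1 : (L:ℝ) < (n:ℝ) + 1 := by
      calc (L:ℝ) < ε/2 * Real.logb 2 (Real.logb 2 (n:ℝ)) + 1 :=
          Nat.ceil_lt_add_one hbound_nonneg
        _ ≤ (n:ℝ) + 1 := by linarith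
    have h2 : L < n + 1 := by exact_mod_cast h1
    omega
  have htn : t ≤ n := by
    have h1 : (n:ℝ) * (1 - p - ε/2) ≤ (n:ℝ) := by
      have hnn : (0:ℝ) ≤ (n:ℝ) * (p + ε/2) := mul_nonneg (by linarith) (by linarith)
      linarith
    calc t ≤ ⌈(n:ℝ)⌉₊ := Nat.ceil_mono h1
      _ = n := Nat.ceil_natCast n
  have hnM : n ≤ M := by
    have h1 : (n:ℝ) ≤ (2:ℝ) ^ ((n:ℝ) * (1 - p - ε)) := by
      calc (n:ℝ) = (2:ℝ) ^ (Real.logb 2 (n:ℝ)) :=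
          (Real.rpow_logb (by norm_num) (by norm_num) (by linarith)).symm
        _ ≤ (2:ℝ) ^ ((n:ℝ) * (1 - p - ε)) := by
            apply Real.rpow_le_rpow_of_exponent_le one_le_two
            calc Real.logb 2 (n:ℝ) ≤ (1 - p - ε) * n := hlogbδ
              _ = (n:ℝ) * (1 - p - ε) := by ring
    calc n = ⌈((n:ℕ):ℝ)⌉₊ := (Nat.ceil_natCast n).symm
      _ ≤ M := Nat.ceil_mono h1
  have hLM : L ≤ M := le_trans hLn hnM
  have hLt_Mn : L * t ≤ M * n := Nat.mul_le_mul hLM htn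
  have hexp : 2 * n + (aa * L + b * L) < L * t := by
    have hLR : 8/ε ≤ (L:ℝ) := by
      have e1 : (L0:ℝ) ≤ (L:ℝ) := by exact_mod_cast hLge
      have e2 : 12/ε ≤ (L0:ℝ) := by
        rw [hL0def]
        push_cast
        linarith [Nat.le_ceil (12/ε)]
      have e3 : 8/ε ≤ 12/ε := by
        have e4 : 12/ε - 8/ε = 4/ε := by ring
        have e5 : (0:ℝ) ≤ 4/ε := by positivity
        linarith
      linarith
    have hLpos : (0:ℝ) < (L:ℝ) := by exact_mod_cast hL1
    have haR : (aa:ℝ) ≤ (n:ℝ) * (1 - p - ε) + 1 :=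
      le_of_lt (Nat.ceil_lt_add_one hδn_nonneg)
    have hbR : (b:ℝ) ≤ ((n:ℝ) ^ ((3:ℝ)/4) + 1) * (Real.logb 2 ((n:ℝ) + 1) + 1) := by
      have h1 : (cc:ℝ) ≤ Real.logb 2 ((n:ℝ) + 1) + 1 :=
        le_of_lt (Nat.ceil_lt_add_one (Real.logb_nonneg one_lt_two (by linarith)))
      have h2 : ((r0:ℝ) + 1) ≤ (n:ℝ) ^ ((3:ℝ)/4) + 1 := by
        have := Nat.floor_le (Real.rpow_nonneg (by linarith : (0:ℝ) ≤ (n:ℝ)) ((3:ℝ)/4))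
        linarith
      have hccnn : (0:ℝ) ≤ (cc:ℝ) := Nat.cast_nonneg _
      have hbcast : (b:ℝ) = (cc:ℝ) * ((r0:ℝ) + 1) := by
        rw [hbdef]
        push_cast
        ring
      rw [hbcast]
      calc (cc:ℝ) * ((r0:ℝ) + 1)
          ≤ (Real.logb 2 ((n:ℝ) + 1) + 1) * ((n:ℝ) ^ ((3:ℝ)/4) + 1) :=
            mul_le_mul h1 h2 (by positivity) (by linarith)
        _ = ((n:ℝ) ^ ((3:ℝ)/4) + 1) * (Real.logb 2 ((n:ℝ) + 1) + 1) := by ring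
    have htR : (n:ℝ) * (1 - p - ε/2) ≤ (t:ℝ) := Nat.le_ceil _
    have hmas' : 1 + (b:ℝ) ≤ ε/8 * n := by linarith
    have hfinR : 2 * (n:ℝ) + ((aa:ℝ) * (L:ℝ) + (b:ℝ) * (L:ℝ)) < (L:ℝ) * (t:ℝ) := by
      have e1 : 2 * (n:ℝ) ≤ (L:ℝ) * (ε/4 * n) := by
        have h1 : (8/ε) * (ε/4 * (n:ℝ)) = 2 * n := by
          field_simp
          ring
        calc 2 * (n:ℝ) = (8/ε) * (ε/4 * n) := h1.symm
          _ ≤ (L:ℝ) * (ε/4 * n) :=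
              mul_le_mul_of_nonneg_right hLR (by positivity)
      have e2 : (aa:ℝ) * (L:ℝ) ≤ (L:ℝ) * ((n:ℝ) * (1 - p - ε) + 1) := by
        rw [mul_comm]
        exact mul_le_mul_of_nonneg_left haR hLpos.le
      have e3 : (b:ℝ) * (L:ℝ) ≤ (L:ℝ) * (ε/8 * n - 1) := by
        rw [mul_comm]
        exact mul_le_mul_of_nonneg_left (by linarith) hLpos.le
      have e4 : (L:ℝ) * (ε/4 * n) + (L:ℝ) * ((n:ℝ) * (1 - p - ε) + 1) +
          (L:ℝ) * (ε/8 * n - 1) < (L:ℝ) * ((n:ℝ) * (1 - p - ε/2)) := by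
        have hsum : (ε/4 * (n:ℝ)) + ((n:ℝ) * (1 - p - ε) + 1) + (ε/8 * n - 1)
            < (n:ℝ) * (1 - p - ε/2) := by
          have hne : (0:ℝ) < (n:ℝ) * ε := mul_pos (by linarith) hε
          linarith
        calc (L:ℝ) * (ε/4 * n) + (L:ℝ) * ((n:ℝ) * (1 - p - ε) + 1) +
              (L:ℝ) * (ε/8 * n - 1)
            = (L:ℝ) * ((ε/4 * (n:ℝ)) + ((n:ℝ) * (1 - p - ε) + 1) + (ε/8 * n - 1)) := by
              ring
          _ < (L:ℝ) * ((n:ℝ) * (1 - p - ε/2)) := by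
              exact mul_lt_mul_of_pos_left hsum hLpos
      have e5 : (L:ℝ) * ((n:ℝ) * (1 - p - ε/2)) ≤ (L:ℝ) * (t:ℝ) :=
        mul_le_mul_of_nonneg_left htR hLpos.le
      linarith
    exact_mod_cast hfinR
  have hcode_h : 2^n * 2^n * (M ^ L * ((r0 + 1) * n ^ r0) ^ L) * 2 ^ (M * n - L * t)
      < 2 ^ (M * n) := by
    calc 2^n * 2^n * (M ^ L * ((r0 + 1) * n ^ r0) ^ L) * 2 ^ (M * n - L * t)
        ≤ 2^n * 2^n * ((2 ^ aa) ^ L * (2 ^ b) ^ L) * 2 ^ (M * n - L * t) :=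
          Nat.mul_le_mul_right _ (Nat.mul_le_mul_left _
            (Nat.mul_le_mul (Nat.pow_le_pow_left hMle L) (Nat.pow_le_pow_left hq2 L)))
      _ = 2 ^ (n + n + (aa * L + b * L) + (M * n - L * t)) := by
          rw [← pow_mul, ← pow_mul, ← pow_add, ← pow_add, ← pow_add, ← pow_add]
      _ < 2 ^ (M * n) := Nat.pow_lt_pow_right one_lt_two (by omega)
  obtain ⟨u, hu⟩ := exists_code n M t r0 L (by omega) hcode_h
  refine ⟨u, part, ?_, ?_⟩
  · intro m m' hmm' T hT
    have h1 : (T.filter fun i => part m i = part m' i).card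
        ≤ (Finset.univ.filter fun i => part m i = part m' i).card :=
      Finset.card_le_card (Finset.filter_subset_filter _ (Finset.subset_univ T))
    have h2 := hpart m m' hmm'
    have h4 : (T.filter fun i => part m i = part m' i).card ≤ ⌊ε * (n:ℝ) / 4⌋₊ := by omega
    have h3 : ((T.filter fun i => part m i = part m' i).card : ℝ) ≤ ε * (n:ℝ) / 4 := by
      calc ((T.filter fun i => part m i = part m' i).card : ℝ)
          ≤ (⌊ε * (n:ℝ) / 4⌋₊ : ℝ) := by exact_mod_cast h4
        _ ≤ ε * (n:ℝ) / 4 := Nat.floor_le (by positivity)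
    linarith
  · intro T' hT' y
    have hfilter_eq : (Finset.univ.filter fun m =>
        (((T'.filter fun i => u m i ≠ y i).card : ℝ) ≤ (n:ℝ) ^ ((3:ℝ)/4)))
        = (Finset.univ.filter fun m => (T'.filter fun i => u m i ≠ y i).card ≤ r0) := by
      apply Finset.filter_congr
      intro m _
      rw [hr0def]
      exact (Nat.le_floor_iff (Real.rpow_nonneg (by positivity) _)).symm
    rw [hfilter_eq]
    have hcount := hu T' hT' y
    have hLlt : (L:ℝ) < ε/2 * Real.logb 2 (Real.logb 2 (n:ℝ)) + 1 :=
      Nat.ceil_lt_add_one hbound_nonneg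
    have hc1 : ((Finset.univ.filter fun m =>
        (T'.filter fun i => u m i ≠ y i).card ≤ r0).card : ℝ) + 1 ≤ (L:ℝ) := by
      exact_mod_cast hcount
    linarith
end

section
/- For every real r ∈ (0,1) and every real λ > 0 with λ·r < 1: λr·ln(λ) + (1 − λr)·ln((1 − λr)/(1 − r)) > r·(λ·ln λ − λ + 1) − λ·r². Equivalently, D(λr ‖ r) > r(λ ln λ − λ + 1) − λr², where D is the binary Kullback–Leibler divergence in nats. -/
/-- Taylor-expansion lower bound on the binary KL divergence (in nats):
for `r ∈ (0,1)` and `λ > 0` with `λ r < 1`,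
`D(λr ‖ r) = λr ln λ + (1 - λr) ln((1 - λr)/(1 - r)) > r(λ ln λ - λ + 1) - λ r²`. -/
theorem kl_taylor_lower_bound (r lam : ℝ) (hr0 : 0 < r) (hr1 : r < 1)
    (hlam : 0 < lam) (hlamr : lam * r < 1) :
    r * (lam * Real.log lam - lam + 1) - lam * r ^ 2 <
      lam * r * Real.log lam + (1 - lam * r) * Real.log ((1 - lam * r) / (1 - r)) := by
  have ht0 : 0 < lam * r := mul_pos hlam hr0
  have ht1 : 0 < 1 - lam * r := by linarith
  have hr1' : 0 < 1 - r := by linarith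
  have hb : Real.log (1 - r) < -r := by
    have := Real.log_lt_sub_one_of_pos hr1' (by intro h; linarith)
    linarith
  have ha : -(lam * r) ≤ (1 - lam * r) * Real.log (1 - lam * r) := by
    have h := Real.log_le_sub_one_of_pos (show (0:ℝ) < 1 / (1 - lam * r) by positivity)
    rw [Real.log_div one_ne_zero (ne_of_gt ht1), Real.log_one] at h
    have h2 : (1 - lam*r) * (0 - Real.log (1 - lam*r)) ≤ (1 - lam*r) * (1/(1-lam*r) - 1) :=
      mul_le_mul_of_nonneg_left h (le_of_lt ht1)
    have h3 : (1 - lam*r) * (1/(1-lam*r)) = 1 := by field_simp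
    nlinarith
  rw [Real.log_div (ne_of_gt ht1) (ne_of_gt hr1')]
  nlinarith [mul_lt_mul_of_pos_left hb ht1]
end

section
/- There exist β > 0 and q₀ ∈ (0, 1/2) such that for every q ∈ (0, q₀) and every ζ with q < ζ < 2q satisfying D(ζ ‖ q) = D(ζ ‖ 2q), one has D(ζ ‖ q) ≥ β·q, where D denotes the binary Kullback–Leibler divergence in nats. -/
/-- Binary Kullback–Leibler divergence in nats. -/
noncomputable def klBin (a b : ℝ) : ℝ :=
  a * Real.log (a / b) + (1 - a) * Real.log ((1 - a) / (1 - b))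

/-!
Each of `D(ζ ‖ q)` and `D(ζ ‖ 2q)` dominates the squared distance between square roots,
`(√ζ - √q)²` and `(√ζ - √(2q))²` respectively (the Hellinger lower bound for the Kullback–Leibler
divergence, which is `log y ≥ 1 - 1/y` applied at `y = √(a/b)`). At the threshold the two
divergences are equal, so their common value is at least half the sum of these squares, which
is at least `(√(2q) - √q)² / 4 = (√2 - 1)² q / 4`.
-/

open Real

lemma sq_sqrt_sub_add_sub_le_mul_log_div {x y : ℝ} (hx : 0 ≤ x) (hy : 0 < y) :
    (√x - √y) ^ 2 + (x - y) ≤ x * log (x / y) := by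
  rcases hx.eq_or_lt with rfl | hx
  · simp [sq_sqrt hy.le]
  have hsx : 0 < √x := sqrt_pos.2 hx
  have hsy : 0 < √y := sqrt_pos.2 hy
  have hlog : 2 * (1 - √y / √x) ≤ log (x / y) := by
    have hsq : x / y = (√x / √y) ^ 2 := by rw [div_pow, sq_sqrt hx.le, sq_sqrt hy.le]
    have := one_sub_inv_le_log_of_pos (div_pos hsx hsy)
    rw [inv_div] at this
    rw [hsq, log_pow]
    push_cast
    linarith
  calc (√x - √y) ^ 2 + (x - y) = x * (2 * (1 - √y / √x)) := by
        field_simp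
        linear_combination (√x - 2 * √y) * sq_sqrt hx.le + √x * sq_sqrt hy.le
    _ ≤ x * log (x / y) := mul_le_mul_of_nonneg_left hlog hx.le

lemma sq_sqrt_sub_add_sq_sqrt_sub_le_klBin {a b : ℝ} (ha₀ : 0 ≤ a) (ha₁ : a ≤ 1)
    (hb₀ : 0 < b) (hb₁ : b < 1) :
    (√a - √b) ^ 2 + (√(1 - a) - √(1 - b)) ^ 2 ≤ klBin a b := by
  have h₁ := sq_sqrt_sub_add_sub_le_mul_log_div ha₀ hb₀
  have h₂ := sq_sqrt_sub_add_sub_le_mul_log_div (sub_nonneg.2 ha₁) (sub_pos.2 hb₁)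
  unfold klBin
  linarith

/-- Lower bound on the Chernoff/Sanov exponent at the ML threshold between
`Bernoulli(q)` and `Bernoulli(2q)`: there exist `β > 0` and `q₀ ∈ (0, 1/2)` such that
for every `q ∈ (0, q₀)` and every `ζ ∈ (q, 2q)` with `D(ζ ‖ q) = D(ζ ‖ 2q)`,
one has `D(ζ ‖ q) ≥ β q`. -/
theorem threshold_divergence_lower_bound :
    ∃ β : ℝ, 0 < β ∧ ∃ q₀ : ℝ, 0 < q₀ ∧ q₀ < 1 / 2 ∧
      ∀ q ζ : ℝ, 0 < q → q < q₀ → q < ζ → ζ < 2 * q →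
        klBin ζ q = klBin ζ (2 * q) → β * q ≤ klBin ζ q := by
  refine ⟨(√2 - 1) ^ 2 / 4, by have := sub_pos.2 one_lt_sqrt_two; positivity, 1 / 4, by norm_num,
    by norm_num, fun q ζ hq hq₀ hqζ hζq heq => ?_⟩
  have hζ : 0 ≤ ζ := by linarith
  have h₁ := sq_sqrt_sub_add_sq_sqrt_sub_le_klBin hζ (by linarith) hq (by linarith)
  have h₂ := sq_sqrt_sub_add_sq_sqrt_sub_le_klBin (b := 2 * q) hζ (by linarith) (by linarith)
    (by linarith)
  have hsqrt : (√2 - 1) ^ 2 * q = (√(2 * q) - √q) ^ 2 := by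
    rw [sqrt_mul zero_le_two, ← sq_sqrt hq.le, sqrt_sq (sqrt_nonneg q)]
    ring
  have hgap : (√2 - 1) ^ 2 * q ≤ 2 * ((√ζ - √q) ^ 2 + (√ζ - √(2 * q)) ^ 2) := by
    rw [hsqrt]
    nlinarith [sq_nonneg (2 * √ζ - √q - √(2 * q))]
  linarith [sq_nonneg (√(1 - ζ) - √(1 - q)), sq_nonneg (√(1 - ζ) - √(1 - 2 * q))]
end

section
/- Let a > 0 be real and m ≥ 0, n ≥ 1 be integers with a < m + 1. Let x_1, …, x_n be pairwise distinct integers, each at least m + 1. Then ∏_{k=1}^{n} (1 − a/x_k) ≥ ∏_{k=1}^{n} (1 − a/(m+k)). -/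
/-- Among all choices of `n` pairwise distinct integers exceeding `m`, the product
`∏ (1 - a / x_k)` is minimized by the consecutive choice `x_k = m + k`: for `0 < a`,
`a < m + 1`, and pairwise distinct integers `x_1, …, x_n` each at least `m + 1`,
`∏_{k=1}^{n} (1 - a / x_k) ≥ ∏_{k=1}^{n} (1 - a / (m + k))`. -/
theorem consecutive_minimizes_product (a : ℝ) (ha : 0 < a) (m n : ℕ) (hn : 1 ≤ n)
    (ham : a < (m : ℝ) + 1) (x : Fin n → ℤ) (hinj : Function.Injective x)
    (hx : ∀ k : Fin n, (m : ℤ) + 1 ≤ x k) :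
    ∏ k : Fin n, (1 - a / ((m : ℝ) + ((k : ℕ) + 1))) ≤
      ∏ k : Fin n, (1 - a / ((x k : ℤ) : ℝ)) := by
  classical
  set S : Finset ℤ := Finset.image x Finset.univ with hS
  have hcard : S.card = n := by
    rw [hS, Finset.card_image_of_injective _ hinj, Finset.card_univ, Fintype.card_fin]
  set e : Fin n ↪o ℤ := S.orderEmbOfFin hcard with he
  have hmemS : ∀ y ∈ S, (m : ℤ) + 1 ≤ y := by
    intro y hy
    rw [hS, Finset.mem_image] at hy
    obtain ⟨k, _, rfl⟩ := hy
    exact hx k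
  have hlb : ∀ i : Fin n, (m : ℤ) + 1 + (i : ℕ) ≤ e i := by
    intro ⟨i, hi⟩
    induction i with
    | zero =>
      simpa using hmemS _ (S.orderEmbOfFin_mem hcard ⟨0, hi⟩)
    | succ j ih =>
      have hj : j < n := Nat.lt_of_succ_lt hi
      have h1 : e ⟨j, hj⟩ < e ⟨j + 1, hi⟩ := by
        exact e.strictMono (by simp [Fin.lt_def])
      have := ih hj
      push_cast
      push_cast at this
      omega
  -- rewrite RHS as product over e
  have hre : ∏ k : Fin n, (1 - a / ((x k : ℤ) : ℝ)) =
      ∏ i : Fin n, (1 - a / ((e i : ℤ) : ℝ)) := by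
    rw [← Finset.prod_image (f := fun y : ℤ => 1 - a / (y : ℝ))
      (fun k _ l _ h => hinj h)]
    rw [← hS]
    rw [show (∏ y ∈ S, (1 - a / (y : ℝ))) = ∏ y : S, (1 - a / ((y : ℤ) : ℝ)) from
      (Finset.prod_coe_sort S _).symm]
    refine Fintype.prod_equiv (S.orderIsoOfFin hcard).toEquiv.symm _ _ ?_
    intro y
    simp [he, ← Finset.coe_orderIsoOfFin_apply]
  rw [hre]
  apply Finset.prod_le_prod
  · intro i _
    have h1 : a / ((m : ℝ) + ((i : ℕ) + 1)) ≤ 1 := by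
      rw [div_le_one (by positivity)]
      have : (0 : ℝ) ≤ (i : ℕ) := Nat.cast_nonneg _
      linarith
    linarith
  · intro i _
    have hge : ((m : ℝ) + ((i : ℕ) + 1)) ≤ ((e i : ℤ) : ℝ) := by
      have := hlb i
      have : ((m : ℤ) + 1 + (i : ℕ) : ℝ) ≤ ((e i : ℤ) : ℝ) := by exact_mod_cast this
      push_cast at this ⊢
      linarith
    have : a / ((e i : ℤ) : ℝ) ≤ a / ((m : ℝ) + ((i : ℕ) + 1)) :=
      div_le_div_of_nonneg_left (le_of_lt ha) (by positivity) hge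
    linarith
end
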